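/- arXiv:1207.4678 — 3 statements merged into one kernel-verified Lean document; each statement's English description precedes it below -/
import Mathlib

section
/- Let ρ be any probability distribution on ℕ, and for n ∈ ℕ define γ_n(G,θ) = (1/2)√((1+2Gθ)/(n(1−θ))) and Λ_n(ρ) = γ_n(G,θ)·∑_{y : ρ_y ≥ 1/n} √ρ_y + min{ γ_n(G,θ)·∑_{y : ρ_y < 1/n} √ρ_y , ∑_{y : ρ_y < 1/n} ρ_y }, where 1 ≤ G < ∞ and 0 ≤ θ < 1 are fixed constants. Then Λ_n(ρ) → 0 as n → ∞. -/
open scoped BigOperators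
open Filter

noncomputable section

/-- Total variation distance `‖μ − ν‖_TV = (1/2) ∑ₛ |μ(s) − ν(s)|`. -/
def tv {α : Type*} (μ ν : α → ℝ) : ℝ := (1 / 2) * ∑' s, |μ s - ν s|

/-- Column-stochastic Markov kernel on ℕ: `A y x = A(y|x)`. -/
def IsKernel (A : ℕ → ℕ → ℝ) : Prop :=
  (∀ y x, 0 ≤ A y x) ∧ ∀ x, ∑' y, A y x = 1

/-- Stochastic vector on ℕ. -/
def IsStochastic (ξ : ℕ → ℝ) : Prop := (∀ x, 0 ≤ ξ x) ∧ ∑' x, ξ x = 1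

/-- Kernel applied to a vector: `(Aξ)_y = ∑ₓ A(y|x) ξₓ`. -/
def kerApp (A : ℕ → ℕ → ℝ) (ξ : ℕ → ℝ) : ℕ → ℝ := fun y => ∑' x, A y x * ξ x

/-- Iterated kernel application: `kerIter A s ξ = Aˢ ξ`. -/
def kerIter (A : ℕ → ℕ → ℝ) : ℕ → (ℕ → ℝ) → ℕ → ℝ
  | 0, ξ => ξ
  | s + 1, ξ => kerApp A (kerIter A s ξ)

/-- Point mass at `x`. -/
def dirac (x : ℕ) : ℕ → ℝ := fun y => if y = x then 1 else 0

/-- `(G,θ)`-geometric ergodicity of the kernel `A` with stationary distribution `π`: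
`τ_{s+1} = sup_x ‖Aˢ δₓ − π‖_TV ≤ G θˢ` for all `s ≥ 0` (i.e. `τ_s ≤ G θ^{s-1}` for `s ≥ 1`),
with `1 ≤ G` and `0 ≤ θ < 1`. -/
def IsGeomErgodic (A : ℕ → ℕ → ℝ) (π : ℕ → ℝ) (G θ : ℝ) : Prop :=
  1 ≤ G ∧ 0 ≤ θ ∧ θ < 1 ∧ IsStochastic π ∧ kerApp A π = π ∧
    ∀ (s x : ℕ), tv (kerIter A s (dirac x)) π ≤ G * θ ^ s

/-- Joint law of the Markov chain `(p₁, A)` on `ℕⁿ`. -/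
def markovLaw (p : ℕ → ℝ) (A : ℕ → ℕ → ℝ) : (n : ℕ) → (Fin n → ℕ) → ℝ
  | 0, _ => 1
  | n + 1, x => p (x 0) * ∏ i : Fin n, A (x i.succ) (x i.castSucc)

/-- Joint law of the hidden Markov chain `(p₁, A, B)` on `ℕⁿ`. -/
def hmmLaw (p : ℕ → ℝ) (A B : ℕ → ℕ → ℝ) (n : ℕ) (y : Fin n → ℕ) : ℝ :=
  ∑' x : Fin n → ℕ, markovLaw p A n x * ∏ i : Fin n, B (y i) (x i)

/-- Probability of an event under a law. -/
def prob {α : Type*} (μ : α → ℝ) (S : Set α) : ℝ := ∑' s : S, μ s.1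

/-- Expectation of a function under a law. -/
def expect {α : Type*} (μ : α → ℝ) (f : α → ℝ) : ℝ := ∑' s, μ s * f s

/-- Empirical distribution of a sample `Y ∈ ℕⁿ`. -/
def emp {n : ℕ} (Y : Fin n → ℕ) (v : ℕ) : ℝ :=
  (∑ i : Fin n, if Y i = v then (1 : ℝ) else 0) / n


/-- `γ_n(G,θ) = (1/2)√((1+2Gθ)/(n(1−θ)))`. -/
def gam (G θ : ℝ) (n : ℕ) : ℝ := (1 / 2) * Real.sqrt ((1 + 2 * G * θ) / (n * (1 - θ)))

/-- `Λ_n(ρ) = γ_n ∑_{ρ_y ≥ 1/n} √ρ_y + min( γ_n ∑_{ρ_y < 1/n} √ρ_y , ∑_{ρ_y < 1/n} ρ_y )`. -/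
def Lam (G θ : ℝ) (ρ : ℕ → ℝ) (n : ℕ) : ℝ :=
  gam G θ n * (∑' y, if 1 / (n : ℝ) ≤ ρ y then Real.sqrt (ρ y) else 0) +
    min (gam G θ n * ∑' y, if ρ y < 1 / (n : ℝ) then Real.sqrt (ρ y) else 0)
      (∑' y, if ρ y < 1 / (n : ℝ) then ρ y else 0)

/-!
Write `ε = 1/n`, so that `γ_n = γ_1 √ε`, and bound the `min` by its second argument. On the
large atoms `ε ≤ ρ_y` one has `√ε √ρ_y ≤ ρ_y`, so both remaining series have terms dominated by
the summable `ρ`; each term tends to `0` as `ε → 0`, and dominated convergence for series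
finishes the proof.
-/

open Real

section

variable {α : Type*} {f : α → ℝ}

theorem tendsto_tsum_ite_lt_zero (hf : Summable f) (hf0 : ∀ y, 0 ≤ f y) :
    Tendsto (fun ε : ℝ => ∑' y, if f y < ε then f y else 0) (nhds 0) (nhds 0) := by
  have h := tendsto_tsum_of_dominated_convergence (𝓕 := nhds (0 : ℝ))
    (f := fun ε y => if f y < ε then f y else 0) (g := fun _ => 0) hf (fun y => ?_)
    (.of_forall fun ε y => ?_)
  · simpa using h
  · rcases (hf0 y).eq_or_lt with hy | hy
    · simp [← hy]
    · refine tendsto_const_nhds.congr' ?_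
      filter_upwards [eventually_lt_nhds hy] with ε hε
      rw [if_neg hε.not_gt]
  · split_ifs
    · rw [norm_of_nonneg (hf0 y)]
    · simpa using hf0 y

theorem sqrt_mul_sqrt_le_of_le {ε r : ℝ} (hε : ε ≤ r) (hr : 0 ≤ r) : √ε * √r ≤ r := by
  calc √ε * √r ≤ √r * √r := by gcongr
    _ = r := mul_self_sqrt hr

theorem tendsto_sqrt_mul_tsum_ite_le_zero (hf : Summable f) (hf0 : ∀ y, 0 ≤ f y) :
    Tendsto (fun ε : ℝ => √ε * ∑' y, if ε ≤ f y then √(f y) else 0) (nhds 0) (nhds 0) := by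
  have h := tendsto_tsum_of_dominated_convergence (𝓕 := nhds (0 : ℝ))
    (f := fun ε y => √ε * if ε ≤ f y then √(f y) else 0) (g := fun _ => 0) hf (fun y => ?_)
    (.of_forall fun ε y => ?_)
  · simpa only [tsum_mul_left, tsum_zero] using h
  · refine squeeze_zero_norm (a := fun ε => √ε * √(f y)) (fun ε => ?_) ?_
    · rw [norm_of_nonneg (by positivity)]
      gcongr
      split_ifs <;> simp
    · simpa using (continuous_sqrt.tendsto 0).mul_const √(f y)
  · split_ifs with hε
    · rw [norm_of_nonneg (by positivity)]
      exact sqrt_mul_sqrt_le_of_le hε (hf0 y)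
    · simpa using hf0 y

end

theorem gam_eq_mul_sqrt_inv (G θ : ℝ) (n : ℕ) : gam G θ n = gam G θ 1 * √(1 / n) := by
  rw [gam, gam, Nat.cast_one, one_mul, mul_comm (n : ℝ), ← div_div,
    sqrt_div' _ (Nat.cast_nonneg n), one_div (n : ℝ), sqrt_inv]
  ring

theorem Lam_nonneg (G θ : ℝ) {ρ : ℕ → ℝ} (hρ0 : ∀ y, 0 ≤ ρ y) (n : ℕ) : 0 ≤ Lam G θ ρ n := by
  have hgam : 0 ≤ gam G θ n := by unfold gam; positivity
  have hlarge : 0 ≤ ∑' y, if 1 / (n : ℝ) ≤ ρ y then √(ρ y) else 0 :=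
    tsum_nonneg fun y => ite_nonneg (sqrt_nonneg _) le_rfl
  have hsmall : 0 ≤ ∑' y, if ρ y < 1 / (n : ℝ) then √(ρ y) else 0 :=
    tsum_nonneg fun y => ite_nonneg (sqrt_nonneg _) le_rfl
  have hsmall' : 0 ≤ ∑' y, if ρ y < 1 / (n : ℝ) then ρ y else 0 :=
    tsum_nonneg fun y => ite_nonneg (hρ0 y) le_rfl
  exact add_nonneg (mul_nonneg hgam hlarge) (le_min (mul_nonneg hgam hsmall) hsmall')

theorem Lam_tendsto_zero_general (G θ : ℝ)
    (ρ : ℕ → ℝ) (hρ : IsStochastic ρ) :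
    Filter.Tendsto (fun n : ℕ => Lam G θ ρ n) Filter.atTop (nhds 0) := by
  obtain ⟨hρ0, hρ1⟩ := hρ
  have hsum : Summable ρ := by
    by_contra h
    simp [tsum_eq_zero_of_not_summable h] at hρ1
  have hε : Tendsto (fun n : ℕ => 1 / (n : ℝ)) atTop (nhds 0) :=
    tendsto_one_div_atTop_nhds_zero_nat
  have hbound : Tendsto (fun n : ℕ => gam G θ 1 * (√(1 / n) *
      ∑' y, if 1 / (n : ℝ) ≤ ρ y then √(ρ y) else 0) +
      ∑' y, if ρ y < 1 / (n : ℝ) then ρ y else 0) atTop (nhds 0) := by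
    simpa using (((tendsto_sqrt_mul_tsum_ite_le_zero hsum hρ0).comp hε).const_mul _).add
      ((tendsto_tsum_ite_lt_zero hsum hρ0).comp hε)
  refine squeeze_zero (Lam_nonneg G θ hρ0) (fun n => ?_) hbound
  rw [Lam, gam_eq_mul_sqrt_inv, mul_assoc]
  exact add_le_add le_rfl (min_le_right _ _)

/-- **Theorem 3(a).** For every probability distribution `ρ` on ℕ, `Λ_n(ρ) → 0` as `n → ∞`. -/
theorem Lam_tendsto_zero (G θ : ℝ) (hG : 1 ≤ G) (hθ0 : 0 ≤ θ) (hθ1 : θ < 1)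
    (ρ : ℕ → ℝ) (hρ : IsStochastic ρ) :
    Filter.Tendsto (fun n : ℕ => Lam G θ ρ n) Filter.atTop (nhds 0) :=
  Lam_tendsto_zero_general G θ ρ hρ

end
end

section
/- Let Y₁,…,Yₙ be a stationary (G,θ)-geometrically ergodic hidden Markov chain on ℕ with stationary output distribution ρ, and let ρ̂ = ρ̂⁽ⁿ⁾ be the empirical distribution ρ̂_y = (1/n)∑_{i=1}^n 1[Y_i = y]. Then E[ sup_{y∈ℕ} |ρ_y − ρ̂_y| ] ≤ √((1+2Gθ)/(n(1−θ))). -/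
open scoped BigOperators
open Filter

noncomputable section

/-!
Let `c = (1 + 2Gθ) / (n(1 - θ))`. Pointwise `|d| ≤ (d² / t + t) / 2`, so with `t = √c` it suffices
to show `𝔼 ∑_v (ρ_v - ρ̂_v)² ≤ c`. Since `ρ̂_v - ρ_v = n⁻¹ ∑_i (1[Y_i = v] - ρ_v)`, the left side
is `n⁻² ∑_{i,j} ∑_v Cov(1[Y_i = v], 1[Y_j = v])`. A diagonal covariance is at most `ρ_v`. For
`i < j`, stationarity and the Markov property give `Cov = ∑_w π_w B(v|w) ((B Aˢ δ_w)_v - ρ_v)`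
with `s = j - i`, and `(B ξ)_v - (B π)_v ≤ ‖ξ - π‖_TV ≤ G θˢ`; so the covariance is at most
`ρ_v G θ^{|i-j|}`. Summing the geometric series over `j` gives `∑_{i,j} ≤ n (1 + 2Gθ) / (1 - θ)`.
-/

open scoped unitInterval

section Summation

variable {α β : Type*}

theorem summable_uncurry_of_nonneg {f : α → β → ℝ} (h0 : ∀ a b, 0 ≤ f a b)
    (hrow : ∀ a, Summable (f a)) (hsum : Summable fun a => ∑' b, f a b) :
    Summable (Function.uncurry f) :=
  (summable_prod_of_nonneg fun p => h0 p.1 p.2).2 ⟨hrow, hsum⟩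

theorem hasSum_fin_cons_of_nonneg {n : ℕ} {f : (Fin (n + 1) → α) → ℝ} (h0 : ∀ x, 0 ≤ f x)
    (hrow : ∀ a, Summable fun z => f (Fin.cons a z))
    (hsum : Summable fun a => ∑' z, f (Fin.cons a z)) :
    HasSum f (∑' a, ∑' z, f (Fin.cons a z)) := by
  have h := summable_uncurry_of_nonneg (fun a z => h0 (Fin.cons a z)) hrow hsum
  rw [← h.tsum_prod_uncurry hrow]
  exact (Fin.consEquiv fun _ => α).hasSum_iff.1 h.hasSum

theorem hasSum_fin_prod_of_nonneg {n : ℕ} {f : Fin n → α → ℝ} (h0 : ∀ i a, 0 ≤ f i a)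
    (hf : ∀ i, Summable (f i)) :
    HasSum (fun x : Fin n → α => ∏ i, f i (x i)) (∏ i, ∑' a, f i a) := by
  induction n with
  | zero => simp
  | succ n ih =>
    have htail := ih (fun (i : Fin n) => h0 i.succ) (fun i => hf i.succ)
    have hcons : ∀ a (z : Fin n → α), ∏ i, f i (Fin.cons a z i) = f 0 a * ∏ i, f i.succ (z i) :=
      fun a z => Fin.prod_univ_succ _
    have hrow : ∀ a, HasSum (fun z : Fin n → α => ∏ i, f i (Fin.cons a z i))
        (f 0 a * ∏ i : Fin n, ∑' b, f i.succ b) := by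
      simpa only [hcons] using fun a => htail.mul_left (f 0 a)
    have h := hasSum_fin_cons_of_nonneg (f := fun x : Fin (n + 1) → α => ∏ i, f i (x i))
      (fun x => Finset.prod_nonneg fun i _ => h0 i (x i)) (fun a => (hrow a).summable)
      (by simpa only [(hrow _).tsum_eq] using (hf 0).mul_right _)
    rwa [tsum_congr fun a => (hrow a).tsum_eq, tsum_mul_right,
      ← Fin.prod_univ_succ (f := fun i => ∑' a, f i a)] at h

theorem Summable.mul_of_abs_le {μ f : α → ℝ} {C : ℝ} (hμ : Summable μ) (hf : ∀ x, |f x| ≤ C) :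
    Summable fun x => μ x * f x :=
  (hμ.abs.mul_right C).of_norm_bounded fun x => by
    rw [Real.norm_eq_abs, abs_mul]
    exact mul_le_mul_of_nonneg_left (hf x) (abs_nonneg _)

end Summation

theorem abs_le_one_of_mem_unitInterval {x : ℝ} (hx : x ∈ I) : |x| ≤ 1 :=
  abs_le.2 ⟨by linarith [hx.1], hx.2⟩

theorem abs_sub_le_one_of_mem_unitInterval {a b : ℝ} (ha : a ∈ I) (hb : b ∈ I) : |a - b| ≤ 1 :=
  abs_sub_le_iff.2 ⟨by linarith [ha.2, hb.1], by linarith [ha.1, hb.2]⟩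

theorem abs_le_add_div_two_of_sq_le {d S t : ℝ} (ht : 0 < t) (h : d ^ 2 ≤ S) :
    |d| ≤ (S / t + t) / 2 := by
  have e : (S / t + t) / 2 = (S + t * t) / (2 * t) := by field_simp
  rw [e, le_div_iff₀ (by positivity)]
  nlinarith [sq_nonneg (|d| - t), sq_abs d]

/-- `IsStochastic` on an arbitrary index type, such as the path space `Fin n → ℕ`. -/
def IsProbDistrib {α : Type*} (μ : α → ℝ) : Prop := (∀ x, 0 ≤ μ x) ∧ HasSum μ 1

theorem IsStochastic.isProbDistrib {ξ : ℕ → ℝ} (hξ : IsStochastic ξ) : IsProbDistrib ξ := by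
  refine ⟨hξ.1, ?_⟩
  have hs : Summable ξ := by
    by_contra h
    simpa [tsum_eq_zero_of_not_summable h] using hξ.2
  exact hξ.2 ▸ hs.hasSum

namespace IsProbDistrib

variable {α : Type*} {μ f g : α → ℝ} {C D : ℝ}

theorem summable (hμ : IsProbDistrib μ) : Summable μ := hμ.2.summable

theorem tsum_eq_one (hμ : IsProbDistrib μ) : ∑' x, μ x = 1 := hμ.2.tsum_eq

theorem mem_unitInterval (hμ : IsProbDistrib μ) (x : α) : μ x ∈ I :=
  ⟨hμ.1 x, hμ.tsum_eq_one ▸ hμ.summable.le_tsum x fun y _ => hμ.1 y⟩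

theorem summable_mul (hμ : IsProbDistrib μ) (hf : ∀ x, |f x| ≤ C) :
    Summable fun x => μ x * f x :=
  hμ.summable.mul_of_abs_le hf

theorem expect_const (hμ : IsProbDistrib μ) (c : ℝ) : expect μ (fun _ => c) = c := by
  rw [expect, tsum_mul_right, hμ.tsum_eq_one, one_mul]

theorem expect_mono (hμ : IsProbDistrib μ) (hf : ∀ x, |f x| ≤ C) (hg : ∀ x, |g x| ≤ D)
    (hfg : ∀ x, f x ≤ g x) : expect μ f ≤ expect μ g :=
  Summable.tsum_le_tsum (fun x => mul_le_mul_of_nonneg_left (hfg x) (hμ.1 x))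
    (hμ.summable_mul hf) (hμ.summable_mul hg)

theorem expect_mem (hμ : IsProbDistrib μ) (hf : ∀ x, f x ∈ I) : expect μ f ∈ I := by
  have hf1 := fun x => abs_le_one_of_mem_unitInterval (hf x)
  refine ⟨tsum_nonneg fun x => mul_nonneg (hμ.1 x) (hf x).1, ?_⟩
  calc expect μ f ≤ expect μ (fun _ => 1) :=
        hμ.expect_mono hf1 (fun _ => (abs_one (α := ℝ)).le) fun x => (hf x).2
    _ = 1 := hμ.expect_const 1

end IsProbDistrib

theorem expect_const_mul {α : Type*} (μ f : α → ℝ) (c : ℝ) :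
    expect μ (fun x => c * f x) = c * expect μ f := by
  simp only [expect, ← tsum_mul_left]
  exact tsum_congr fun x => by ring

theorem expect_finset_sum {α ι : Type*} {μ : α → ℝ} {s : Finset ι} {f : ι → α → ℝ}
    (hf : ∀ i ∈ s, Summable fun x => μ x * f i x) :
    expect μ (fun x => ∑ i ∈ s, f i x) = ∑ i ∈ s, expect μ (f i) := by
  simp only [expect, Finset.mul_sum]
  exact Summable.tsum_finsetSum hf

theorem IsProbDistrib.expect_mul_add_const {α : Type*} {μ f : α → ℝ} (hμ : IsProbDistrib μ)
    (hf : Summable fun x => μ x * f x) (a b : ℝ) :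
    expect μ (fun x => a * f x + b) = a * expect μ f + b := by
  simp only [expect, mul_add]
  rw [(hf.mul_left a |>.congr fun x => by ring).tsum_add (hμ.summable.mul_right b), tsum_mul_right,
    hμ.tsum_eq_one, one_mul, ← tsum_mul_left]
  exact congrArg (· + b) (tsum_congr fun x => by ring)

theorem IsProbDistrib.expect_sub_mul_sub {α : Type*} {μ X Y : α → ℝ} {m : ℝ}
    (hμ : IsProbDistrib μ) (hX : ∀ s, X s ∈ I) (hY : ∀ s, Y s ∈ I)
    (hXm : expect μ X = m) (hYm : expect μ Y = m) :
    expect μ (fun s => (X s - m) * (Y s - m)) = expect μ (fun s => X s * Y s) - m ^ 2 := by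
  have hXY := hμ.summable_mul fun s =>
    abs_le_one_of_mem_unitInterval (unitInterval.mul_mem (hX s) (hY s))
  have hX' := hμ.summable_mul fun s => abs_le_one_of_mem_unitInterval (hX s)
  have hY' := hμ.summable_mul fun s => abs_le_one_of_mem_unitInterval (hY s)
  have e : ∀ s, μ s * ((X s - m) * (Y s - m))
      = μ s * (X s * Y s) - m * (μ s * X s) - m * (μ s * Y s) + m ^ 2 * μ s := fun s => by ring
  simp only [expect, e] at hXm hYm ⊢
  rw [((hXY.sub (hX'.mul_left m)).sub (hY'.mul_left m)).tsum_add (hμ.summable.mul_left _),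
    (hXY.sub (hX'.mul_left m)).tsum_sub (hY'.mul_left m), hXY.tsum_sub (hX'.mul_left m),
    tsum_mul_left, tsum_mul_left, tsum_mul_left, hXm, hYm, hμ.tsum_eq_one]
  ring

theorem IsProbDistrib.summable_sq_sub {α : Type*} {ξ ν : α → ℝ} (hξ : IsProbDistrib ξ)
    (hν : IsProbDistrib ν) :
    Summable (fun x => (ξ x - ν x) ^ 2) ∧ ∑' x, (ξ x - ν x) ^ 2 ≤ 2 := by
  have hle : ∀ x, (ξ x - ν x) ^ 2 ≤ ξ x + ν x := fun x => by
    have hξx := hξ.mem_unitInterval x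
    have hνx := hν.mem_unitInterval x
    nlinarith [hξx.1, hξx.2, hνx.1, hνx.2]
  have hs := hξ.summable.add hν.summable
  refine ⟨.of_nonneg_of_le (fun x => sq_nonneg _) hle hs, ?_⟩
  calc ∑' x, (ξ x - ν x) ^ 2 ≤ ∑' x, (ξ x + ν x) :=
        Summable.tsum_le_tsum hle (.of_nonneg_of_le (fun x => sq_nonneg _) hle hs) hs
    _ = 2 := by rw [hξ.summable.tsum_add hν.summable, hξ.tsum_eq_one, hν.tsum_eq_one]; norm_num

theorem IsProbDistrib.expect_sub_expect_le_tv {α : Type*} {ξ ν φ : α → ℝ}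
    (hξ : IsProbDistrib ξ) (hν : IsProbDistrib ν) (hφ : ∀ x, φ x ∈ I) :
    expect ξ φ - expect ν φ ≤ tv ξ ν := by
  have hd : Summable fun x => ξ x - ν x := hξ.summable.sub hν.summable
  have hφ' : ∀ x, |φ x - 1 / 2| ≤ 1 / 2 := fun x =>
    abs_le.2 ⟨by linarith [(hφ x).1], by linarith [(hφ x).2]⟩
  have hdφ := hd.mul_of_abs_le hφ'
  -- centring `φ` costs nothing because `ξ - ν` has total mass zero
  have hcentre : expect ξ φ - expect ν φ = ∑' x, (ξ x - ν x) * (φ x - 1 / 2) := by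
    rw [expect, expect, ← (hξ.summable_mul fun x => abs_le_one_of_mem_unitInterval (hφ x)).tsum_sub
      (hν.summable_mul fun x => abs_le_one_of_mem_unitInterval (hφ x))]
    have h0 : ∑' x, (ξ x - ν x) * (1 / 2) = 0 := by
      rw [tsum_mul_right, hξ.summable.tsum_sub hν.summable, hξ.tsum_eq_one, hν.tsum_eq_one]; ring
    rw [← add_zero (∑' x, (ξ x - ν x) * (φ x - 1 / 2)), ← h0, ← hdφ.tsum_add (hd.mul_right _)]
    exact tsum_congr fun x => by ring
  rw [hcentre, tv, ← tsum_mul_left]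
  refine hdφ.tsum_le_tsum (fun x => ?_) (hd.abs.mul_left _)
  calc (ξ x - ν x) * (φ x - 1 / 2) ≤ |ξ x - ν x| * |φ x - 1 / 2| := by
        rw [← abs_mul]; exact le_abs_self _
    _ ≤ 1 / 2 * |ξ x - ν x| := by nlinarith [hφ' x, abs_nonneg (ξ x - ν x)]

theorem isProbDistrib_dirac (x : ℕ) : IsProbDistrib (dirac x) :=
  ⟨fun y => by unfold dirac; positivity, hasSum_ite_eq x 1⟩

theorem dirac_mem_unitInterval (x y : ℕ) : dirac x y ∈ I := by
  unfold dirac; split_ifs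
  exacts [unitInterval.one_mem, unitInterval.zero_mem]

theorem dirac_comm (x y : ℕ) : dirac x y = dirac y x := by
  simp only [dirac, eq_comm]

theorem dirac_mul_self (x y : ℕ) : dirac x y * dirac x y = dirac x y := by
  unfold dirac; split_ifs <;> norm_num

theorem expect_dirac (x : ℕ) (f : ℕ → ℝ) : expect (dirac x) f = f x := by
  rw [expect, tsum_eq_single x fun y hy => by simp [dirac, hy]]
  simp [dirac]

theorem expect_dirac_right (μ : ℕ → ℝ) (x : ℕ) : expect μ (dirac x) = μ x := by
  calc expect μ (dirac x) = expect (dirac x) μ := tsum_congr fun y => by rw [dirac_comm, mul_comm]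
    _ = μ x := expect_dirac x μ

theorem kerApp_eq_expect (A : ℕ → ℕ → ℝ) (ξ : ℕ → ℝ) (y : ℕ) :
    kerApp A ξ y = expect ξ (A y) :=
  tsum_congr fun _ => mul_comm _ _

theorem kerApp_dirac (A : ℕ → ℕ → ℝ) (x : ℕ) : kerApp A (dirac x) = fun y => A y x :=
  funext fun y => by rw [kerApp_eq_expect, expect_dirac]

theorem kerIter_kerApp (A : ℕ → ℕ → ℝ) (ξ : ℕ → ℝ) :
    ∀ s, kerIter A s (kerApp A ξ) = kerIter A (s + 1) ξ
  | 0 => rfl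
  | s + 1 => congrArg (kerApp A) (kerIter_kerApp A ξ s)

theorem kerIter_eq_self {A : ℕ → ℕ → ℝ} {π : ℕ → ℝ} (hπ : kerApp A π = π) :
    ∀ s, kerIter A s π = π
  | 0 => rfl
  | s + 1 => (congrArg (kerApp A) (kerIter_eq_self hπ s)).trans hπ

namespace IsKernel

variable {A : ℕ → ℕ → ℝ} {ξ : ℕ → ℝ}

theorem isProbDistrib_col (hA : IsKernel A) (x : ℕ) : IsProbDistrib fun y => A y x :=
  IsStochastic.isProbDistrib ⟨fun y => hA.1 y x, hA.2 x⟩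

theorem mem_unitInterval (hA : IsKernel A) (y x : ℕ) : A y x ∈ I :=
  (hA.isProbDistrib_col x).mem_unitInterval y

theorem isProbDistrib_kerApp (hA : IsKernel A) (hξ : IsProbDistrib ξ) :
    IsProbDistrib (kerApp A ξ) := by
  have hcol : ∀ x, HasSum (fun y => A y x * ξ x) (ξ x) := fun x => by
    simpa using (hA.isProbDistrib_col x).2.mul_right (ξ x)
  have h := summable_uncurry_of_nonneg (fun x y => mul_nonneg (hA.1 y x) (hξ.1 x))
    (fun x => (hcol x).summable) (by simpa only [(hcol _).tsum_eq] using hξ.summable)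
  refine ⟨fun y => tsum_nonneg fun x => mul_nonneg (hA.1 y x) (hξ.1 x), ?_⟩
  have hsum : ∑' y, kerApp A ξ y = 1 := by
    rw [show kerApp A ξ = fun y => ∑' x, A y x * ξ x from rfl, h.tsum_comm,
      tsum_congr fun x => (hcol x).tsum_eq, hξ.tsum_eq_one]
  exact hsum ▸ (h.prod_symm.prod : Summable (kerApp A ξ)).hasSum

theorem isProbDistrib_kerIter (hA : IsKernel A) (hξ : IsProbDistrib ξ) :
    ∀ s, IsProbDistrib (kerIter A s ξ)
  | 0 => hξ
  | s + 1 => hA.isProbDistrib_kerApp (hA.isProbDistrib_kerIter hξ s)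

end IsKernel

theorem hasSum_fin_cons_mul {α : Type*} {n : ℕ} {p : α → ℝ} {ν : α → (Fin n → α) → ℝ}
    {F : (Fin (n + 1) → α) → ℝ} (hp : IsProbDistrib p) (hν : ∀ a, IsProbDistrib (ν a))
    (hF : ∀ x, F x ∈ I) :
    HasSum (fun x => p (x 0) * ν (x 0) (Fin.tail x) * F x)
      (∑' a, p a * expect (ν a) fun z => F (Fin.cons a z)) := by
  set f := fun x : Fin (n + 1) → α => p (x 0) * ν (x 0) (Fin.tail x) * F x
  have hrow : ∀ a, HasSum (fun z => f (Fin.cons a z))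
      (p a * expect (ν a) fun z => F (Fin.cons a z)) := fun a => by
    have e : (fun z => f (Fin.cons a z)) = fun z => p a * (ν a z * F (Fin.cons a z)) :=
      funext fun z => by simp only [f, Fin.cons_zero, Fin.tail_cons, mul_assoc]
    rw [e]
    exact ((hν a).summable_mul fun z => abs_le_one_of_mem_unitInterval (hF _)).hasSum.mul_left _
  have hE : ∀ a, |expect (ν a) fun z => F (Fin.cons a z)| ≤ 1 := fun a =>
    abs_le_one_of_mem_unitInterval ((hν a).expect_mem fun z => hF _)
  have h := hasSum_fin_cons_of_nonneg (f := f)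
    (fun x => mul_nonneg (mul_nonneg (hp.1 (x 0)) ((hν (x 0)).1 _)) (hF x).1)
    (fun a => (hrow a).summable) (by simpa only [(hrow _).tsum_eq] using hp.summable_mul hE)
  rwa [tsum_congr fun a => (hrow a).tsum_eq] at h

section MarkovChain

variable {A : ℕ → ℕ → ℝ} {p g h : ℕ → ℝ} {n : ℕ}

theorem markovLaw_succ (p : ℕ → ℝ) (A : ℕ → ℕ → ℝ) (n : ℕ) (x : Fin (n + 1) → ℕ) :
    markovLaw p A (n + 1) x = p (x 0) * markovLaw (fun y => A y (x 0)) A n (Fin.tail x) := by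
  cases n with
  | zero => simp [markovLaw]
  | succ n => simp only [markovLaw, Fin.prod_univ_succ, Fin.tail]; rfl

theorem tsum_mul_markovLaw_col (hp : IsProbDistrib p) (z : Fin n → ℕ) :
    ∑' a, p a * markovLaw (fun y => A y a) A n z = markovLaw (kerApp A p) A n z := by
  cases n with
  | zero => simp [markovLaw, hp.tsum_eq_one]
  | succ n =>
    simp only [markovLaw, ← mul_assoc, tsum_mul_right, kerApp_eq_expect, expect]

namespace IsKernel

theorem isProbDistrib_markovLaw (hA : IsKernel A) :
    ∀ {n p}, IsProbDistrib p → IsProbDistrib (markovLaw p A n)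
  | 0, _, _ => ⟨fun _ => zero_le_one, by
      show HasSum (fun _ => (1 : ℝ)) 1
      simpa only [Finset.sum_const, Finset.card_univ, Fintype.card_unique, one_smul] using
        hasSum_fintype (fun _ : Fin 0 → ℕ => (1 : ℝ))⟩
  | n + 1, p, hp => by
    have hν := fun a => hA.isProbDistrib_markovLaw (n := n) (hA.isProbDistrib_col a)
    refine ⟨fun x => ?_, ?_⟩
    · rw [markovLaw_succ]; exact mul_nonneg (hp.1 _) ((hν _).1 _)
    · have h := hasSum_fin_cons_mul (F := fun _ => 1) hp hν fun _ => unitInterval.one_mem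
      simpa only [(hν _).expect_const, mul_one, hp.tsum_eq_one, ← markovLaw_succ] using h

/-- Markov property at the first step. -/
theorem expect_markovLaw_succ (hA : IsKernel A) (hp : IsProbDistrib p)
    {F : (Fin (n + 1) → ℕ) → ℝ} (hF : ∀ x, F x ∈ I) :
    expect (markovLaw p A (n + 1)) F
      = ∑' a, p a * expect (markovLaw (fun y => A y a) A n) fun z => F (Fin.cons a z) := by
  rw [expect, ← (hasSum_fin_cons_mul hp (fun a => hA.isProbDistrib_markovLaw
    (hA.isProbDistrib_col a)) hF).tsum_eq]
  simp only [markovLaw_succ]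

theorem expect_markovLaw_succ_tail (hA : IsKernel A) (hp : IsProbDistrib p)
    {F : (Fin n → ℕ) → ℝ} (hF : ∀ z, F z ∈ I) :
    expect (markovLaw p A (n + 1)) (fun x => F (Fin.tail x))
      = expect (markovLaw (kerApp A p) A n) F := by
  have hν := fun a => hA.isProbDistrib_markovLaw (n := n) (hA.isProbDistrib_col a)
  have hF1 := fun z => abs_le_one_of_mem_unitInterval (hF z)
  have h := summable_uncurry_of_nonneg
    (fun a z => mul_nonneg (hp.1 a) (mul_nonneg ((hν a).1 z) (hF z).1))
    (fun a => ((hν a).summable_mul hF1).mul_left (p a))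
    (by simpa only [tsum_mul_left, expect] using hp.summable_mul fun a =>
      abs_le_one_of_mem_unitInterval ((hν a).expect_mem hF))
  rw [hA.expect_markovLaw_succ hp fun x => hF _]
  simp only [Fin.tail_cons, expect, ← tsum_mul_left]
  rw [← h.tsum_comm]
  refine tsum_congr fun z => ?_
  rw [← tsum_mul_markovLaw_col hp, ← tsum_mul_right]
  exact tsum_congr fun a => by ring

theorem expect_markovLaw_apply (hA : IsKernel A) (hg : ∀ w, g w ∈ I) :
    ∀ {n p} (i : Fin n), IsProbDistrib p →
      expect (markovLaw p A n) (fun x => g (x i)) = expect (kerIter A i p) g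
  | n + 1, p, i, hp => by
    induction i using Fin.cases with
    | zero =>
      rw [hA.expect_markovLaw_succ hp fun x => hg _]
      simp only [Fin.cons_zero, (hA.isProbDistrib_markovLaw (hA.isProbDistrib_col _)).expect_const]
      rfl
    | succ i =>
      refine (hA.expect_markovLaw_succ_tail hp (F := fun z => g (z i)) fun z => hg _).trans ?_
      rw [hA.expect_markovLaw_apply hg i (hA.isProbDistrib_kerApp hp), kerIter_kerApp, Fin.val_succ]

theorem expect_markovLaw_apply_mul_apply (hA : IsKernel A) (hg : ∀ w, g w ∈ I)
    (hh : ∀ w, h w ∈ I) :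
    ∀ {n p} (i j : Fin n), i < j → IsProbDistrib p →
      expect (markovLaw p A n) (fun x => g (x i) * h (x j))
        = expect (kerIter A i p) fun w => g w * expect (kerIter A (j - i : ℕ) (dirac w)) h
  | n + 1, p, i, j, hij, hp => by
    obtain ⟨j, rfl⟩ := Fin.exists_succ_eq.2 (Fin.pos_iff_ne_zero.1 ((Fin.zero_le i).trans_lt hij))
    induction i using Fin.cases with
    | zero =>
      rw [hA.expect_markovLaw_succ hp fun x => unitInterval.mul_mem (hg _) (hh _)]
      refine tsum_congr fun a => ?_
      simp only [Fin.cons_zero, Fin.cons_succ, expect_const_mul]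
      rw [hA.expect_markovLaw_apply hh j (hA.isProbDistrib_col a), ← kerApp_dirac, kerIter_kerApp,
        Fin.val_succ, Fin.val_zero, Nat.sub_zero]
      rfl
    | succ i =>
      refine (hA.expect_markovLaw_succ_tail hp (F := fun z => g (z i) * h (z j))
        fun z => unitInterval.mul_mem (hg _) (hh _)).trans ?_
      rw [hA.expect_markovLaw_apply_mul_apply hg hh i j (Fin.succ_lt_succ_iff.1 hij)
        (hA.isProbDistrib_kerApp hp), kerIter_kerApp]
      simp [Fin.val_succ]

end IsKernel

end MarkovChain

section TestFunctions

variable {ι M N : Type*} [Fintype ι] [DecidableEq ι] [CommMonoid N]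

theorem prod_apply_mulSingle [One M] (F : ι → M → N) (hF : ∀ k, F k 1 = 1) (i : ι) (φ : M) :
    ∏ k, F k ((Pi.mulSingle i φ : ι → M) k) = F i φ := by
  simp only [Pi.apply_mulSingle F hF, Fintype.prod_pi_mulSingle']

theorem prod_apply_mulSingle_mul_mulSingle [MulOneClass M] (F : ι → M → N) (hF : ∀ k, F k 1 = 1)
    {i j : ι} (hij : i ≠ j) (φ ψ : M) :
    ∏ k, F k ((Pi.mulSingle i φ : ι → M) k * (Pi.mulSingle j ψ : ι → M) k)
      = F i φ * F j ψ := by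
  have h : ∀ k, F k ((Pi.mulSingle i φ : ι → M) k * (Pi.mulSingle j ψ : ι → M) k)
      = (Pi.mulSingle i (F i φ) : ι → N) k * (Pi.mulSingle j (F j ψ) : ι → N) k := fun k => by
    by_cases hi : k = i
    · subst hi; simp [Pi.mulSingle_eq_of_ne hij]
    by_cases hj : k = j
    · subst hj; simp [Pi.mulSingle_eq_of_ne hi]
    · simp [Pi.mulSingle_eq_of_ne hi, Pi.mulSingle_eq_of_ne hj, hF]
  simp only [h, Finset.prod_mul_distrib, Fintype.prod_pi_mulSingle']

end TestFunctions

theorem mulSingle_apply_mem_unitInterval {ι α : Type*} [DecidableEq ι] {φ : α → ℝ}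
    (hφ : ∀ u, φ u ∈ I) (i k : ι) (u : α) : (Pi.mulSingle i φ : ι → α → ℝ) k u ∈ I := by
  by_cases hk : k = i
  · subst hk; simp [hφ u]
  · simp [Pi.mulSingle_eq_of_ne hk]

section HiddenMarkovChain

variable {A B : ℕ → ℕ → ℝ} {π φ ψ : ℕ → ℝ} {n : ℕ}

theorem hasSum_hmmLaw_mul_prod (hA : IsKernel A) (hB : IsKernel B) (hπ : IsProbDistrib π)
    {g : Fin n → ℕ → ℝ} (hg : ∀ i u, g i u ∈ I) :
    HasSum (fun Y => hmmLaw π A B n Y * ∏ i, g i (Y i))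
      (expect (markovLaw π A n) fun x => ∏ i, expect (fun u => B u (x i)) (g i)) := by
  have hM := hA.isProbDistrib_markovLaw (n := n) hπ
  set q : (Fin n → ℕ) → (Fin n → ℕ) → ℝ :=
    fun x Y => markovLaw π A n x * ∏ i, (B (Y i) (x i) * g i (Y i))
  have hrow : ∀ x, HasSum (q x) (markovLaw π A n x * ∏ i, expect (fun u => B u (x i)) (g i)) :=
    fun x => (hasSum_fin_prod_of_nonneg (fun i u => mul_nonneg (hB.1 u (x i)) (hg i u).1)
      fun i => (hB.isProbDistrib_col (x i)).summable_mul fun u =>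
        abs_le_one_of_mem_unitInterval (hg i u)).mul_left _
  have h := summable_uncurry_of_nonneg (f := q)
    (fun x Y => mul_nonneg (hM.1 x) (Finset.prod_nonneg fun i _ =>
      mul_nonneg (hB.1 _ _) (hg i _).1))
    (fun x => (hrow x).summable)
    (by simpa only [(hrow _).tsum_eq] using hM.summable_mul fun x =>
      abs_le_one_of_mem_unitInterval (unitInterval.prod_mem (t := Finset.univ) fun i _ =>
        (hB.isProbDistrib_col (x i)).expect_mem (hg i)))
  have hcol : ∀ Y, ∑' x, q x Y = hmmLaw π A B n Y * ∏ i, g i (Y i) := fun Y => by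
    simp only [q, hmmLaw, ← tsum_mul_right, mul_assoc, Finset.prod_mul_distrib]
  have key : HasSum (fun Y => ∑' x, q x Y) (∑' Y, ∑' x, q x Y) := h.prod_symm.prod.hasSum
  rw [h.tsum_comm, tsum_congr fun x => (hrow x).tsum_eq] at key
  simpa only [hcol, expect] using key

theorem isProbDistrib_hmmLaw (hA : IsKernel A) (hB : IsKernel B) (hπ : IsProbDistrib π) :
    IsProbDistrib (hmmLaw π A B n) := by
  have h := hasSum_hmmLaw_mul_prod (n := n) (g := fun _ _ => 1) hA hB hπ
    fun _ _ => unitInterval.one_mem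
  simp only [Finset.prod_const_one, mul_one, (hB.isProbDistrib_col _).expect_const] at h
  refine ⟨fun Y => tsum_nonneg fun x => mul_nonneg ((hA.isProbDistrib_markovLaw hπ).1 x)
    (Finset.prod_nonneg fun i _ => hB.1 _ _), ?_⟩
  simpa only [(hA.isProbDistrib_markovLaw hπ).expect_const] using h

theorem expect_hmmLaw_apply (hA : IsKernel A) (hB : IsKernel B) (hπ : IsProbDistrib π)
    (hφ : ∀ u, φ u ∈ I) (i : Fin n) :
    expect (hmmLaw π A B n) (fun Y => φ (Y i))
      = expect (markovLaw π A n) fun x => expect (fun u => B u (x i)) φ := by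
  have hY : ∀ Y : Fin n → ℕ, ∏ k, (Pi.mulSingle i φ : Fin n → ℕ → ℝ) k (Y k) = φ (Y i) := fun Y =>
    prod_apply_mulSingle (fun k (f : ℕ → ℝ) => f (Y k)) (fun _ => rfl) i φ
  have hx : ∀ x : Fin n → ℕ, ∏ k, expect (fun u => B u (x k)) ((Pi.mulSingle i φ : Fin n → ℕ → ℝ) k)
      = expect (fun u => B u (x i)) φ := fun x =>
    prod_apply_mulSingle (fun k => expect fun u => B u (x k))
      (fun k => (hB.isProbDistrib_col (x k)).expect_const 1) i φ
  have h := (hasSum_hmmLaw_mul_prod hA hB hπ (mulSingle_apply_mem_unitInterval hφ i)).tsum_eq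
  simp only [hY, hx] at h
  exact h

theorem expect_hmmLaw_apply_mul_apply (hA : IsKernel A) (hB : IsKernel B) (hπ : IsProbDistrib π)
    (hφ : ∀ u, φ u ∈ I) (hψ : ∀ u, ψ u ∈ I) {i j : Fin n} (hij : i ≠ j) :
    expect (hmmLaw π A B n) (fun Y => φ (Y i) * ψ (Y j))
      = expect (markovLaw π A n) fun x =>
          expect (fun u => B u (x i)) φ * expect (fun u => B u (x j)) ψ := by
  have hY : ∀ Y : Fin n → ℕ, ∏ k, ((Pi.mulSingle i φ : Fin n → ℕ → ℝ) k
      * (Pi.mulSingle j ψ : Fin n → ℕ → ℝ) k) (Y k) = φ (Y i) * ψ (Y j) := fun Y =>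
    prod_apply_mulSingle_mul_mulSingle (fun k (f : ℕ → ℝ) => f (Y k)) (fun _ => rfl) hij φ ψ
  have hx : ∀ x : Fin n → ℕ, ∏ k, expect (fun u => B u (x k))
      ((Pi.mulSingle i φ : Fin n → ℕ → ℝ) k * (Pi.mulSingle j ψ : Fin n → ℕ → ℝ) k)
      = expect (fun u => B u (x i)) φ * expect (fun u => B u (x j)) ψ := fun x =>
    prod_apply_mulSingle_mul_mulSingle (fun k => expect fun u => B u (x k))
      (fun k => (hB.isProbDistrib_col (x k)).expect_const 1) hij φ ψ
  have h := (hasSum_hmmLaw_mul_prod hA hB hπ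
    (g := fun k => (Pi.mulSingle i φ : Fin n → ℕ → ℝ) k * (Pi.mulSingle j ψ : Fin n → ℕ → ℝ) k)
    fun k u => unitInterval.mul_mem
    (mulSingle_apply_mem_unitInterval hφ i k u) (mulSingle_apply_mem_unitInterval hψ j k u)).tsum_eq
  simp only [hY, hx] at h
  exact h

end HiddenMarkovChain

section StationaryOutput

variable {A B : ℕ → ℕ → ℝ} {π : ℕ → ℝ} {n : ℕ}

theorem expect_hmmLaw_dirac_apply (hA : IsKernel A) (hB : IsKernel B) (hπ : IsProbDistrib π)
    (hfix : kerApp A π = π) (v : ℕ) (i : Fin n) :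
    expect (hmmLaw π A B n) (fun Y => dirac v (Y i)) = kerApp B π v := by
  rw [expect_hmmLaw_apply hA hB hπ (dirac_mem_unitInterval v) i]
  simp only [expect_dirac_right]
  rw [hA.expect_markovLaw_apply (hB.mem_unitInterval v) i hπ, kerIter_eq_self hfix,
    kerApp_eq_expect]

theorem expect_hmmLaw_dirac_apply_mul_dirac_apply (hA : IsKernel A) (hB : IsKernel B)
    (hπ : IsProbDistrib π) (hfix : kerApp A π = π) (v : ℕ) {i j : Fin n} (hij : i < j) :
    expect (hmmLaw π A B n) (fun Y => dirac v (Y i) * dirac v (Y j))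
      = expect π fun w => B v w * kerApp B (kerIter A (j - i : ℕ) (dirac w)) v := by
  rw [expect_hmmLaw_apply_mul_apply hA hB hπ (dirac_mem_unitInterval v) (dirac_mem_unitInterval v)
    hij.ne]
  simp only [expect_dirac_right]
  rw [hA.expect_markovLaw_apply_mul_apply (hB.mem_unitInterval v) (hB.mem_unitInterval v) i j
    hij hπ, kerIter_eq_self hfix]
  simp only [kerApp_eq_expect]

theorem expect_hmmLaw_cov_self_le (hA : IsKernel A) (hB : IsKernel B) (hπ : IsProbDistrib π)
    (hfix : kerApp A π = π) (v : ℕ) (i : Fin n) :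
    expect (hmmLaw π A B n)
        (fun Y => (dirac v (Y i) - kerApp B π v) * (dirac v (Y i) - kerApp B π v))
      ≤ kerApp B π v := by
  have hE := expect_hmmLaw_dirac_apply hA hB hπ hfix v i
  rw [(isProbDistrib_hmmLaw hA hB hπ).expect_sub_mul_sub (fun Y => dirac_mem_unitInterval v _)
    (fun Y => dirac_mem_unitInterval v _) hE hE]
  simp only [dirac_mul_self, hE]
  nlinarith [sq_nonneg (kerApp B π v)]

theorem expect_hmmLaw_cov_le_of_lt {G θ : ℝ} (hA : IsKernel A) (hB : IsKernel B)
    (hge : IsGeomErgodic A π G θ) (v : ℕ) {i j : Fin n} (hij : i < j) :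
    expect (hmmLaw π A B n)
        (fun Y => (dirac v (Y i) - kerApp B π v) * (dirac v (Y j) - kerApp B π v))
      ≤ kerApp B π v * (G * θ ^ (j - i : ℕ)) := by
  obtain ⟨hG, hθ0, -, hπ, hfix, htv⟩ := hge
  replace hπ := hπ.isProbDistrib
  set ρ := kerApp B π v
  set c := G * θ ^ (j - i : ℕ)
  have hc : 0 ≤ c := mul_nonneg (by linarith) (pow_nonneg hθ0 _)
  have hKw := fun w => hA.isProbDistrib_kerIter (isProbDistrib_dirac w) (j - i)
  have hpt : ∀ w, B v w * kerApp B (kerIter A (j - i) (dirac w)) v ≤ (ρ + c) * B v w := fun w => by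
    have h := (hKw w).expect_sub_expect_le_tv hπ (hB.mem_unitInterval v)
    rw [← kerApp_eq_expect, ← kerApp_eq_expect] at h
    nlinarith [htv (j - i) w, hB.1 v w]
  have hρ : 0 ≤ ρ := (hB.isProbDistrib_kerApp hπ).1 v
  rw [(isProbDistrib_hmmLaw hA hB hπ).expect_sub_mul_sub (fun Y => dirac_mem_unitInterval v _)
    (fun Y => dirac_mem_unitInterval v _) (expect_hmmLaw_dirac_apply hA hB hπ hfix v i)
    (expect_hmmLaw_dirac_apply hA hB hπ hfix v j),
    expect_hmmLaw_dirac_apply_mul_dirac_apply hA hB hπ hfix v hij]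
  have hmono := hπ.expect_mono (D := ρ + c) (fun w => abs_le_one_of_mem_unitInterval
      (unitInterval.mul_mem (hB.mem_unitInterval v w)
        ((hB.isProbDistrib_kerApp (hKw w)).mem_unitInterval v)))
    (fun w => by
      rw [abs_of_nonneg (mul_nonneg (by linarith) (hB.1 v w))]
      exact mul_le_of_le_one_right (by linarith) (hB.mem_unitInterval v w).2) hpt
  rw [expect_const_mul, ← kerApp_eq_expect] at hmono
  nlinarith

theorem expect_hmmLaw_cov_le {G θ : ℝ} (hA : IsKernel A) (hB : IsKernel B)
    (hge : IsGeomErgodic A π G θ) (v : ℕ) (i j : Fin n) :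
    expect (hmmLaw π A B n)
        (fun Y => (dirac v (Y i) - kerApp B π v) * (dirac v (Y j) - kerApp B π v))
      ≤ kerApp B π v * if i = j then 1 else G * θ ^ Nat.dist i j := by
  rcases lt_trichotomy i j with hij | rfl | hij
  · rw [if_neg hij.ne, Nat.dist_eq_sub_of_le (Fin.le_iff_val_le_val.1 hij.le)]
    exact expect_hmmLaw_cov_le_of_lt hA hB hge v hij
  · rw [if_pos rfl, mul_one]
    exact expect_hmmLaw_cov_self_le hA hB hge.2.2.2.1.isProbDistrib hge.2.2.2.2.1 v i
  · rw [if_neg hij.ne', Nat.dist_eq_sub_of_le_right (Fin.le_iff_val_le_val.1 hij.le),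
      congrArg (expect _) (funext fun Y => mul_comm _ _)]
    exact expect_hmmLaw_cov_le_of_lt hA hB hge v hij

end StationaryOutput

theorem sum_pow_le_of_injOn {ι : Type*} {s : Finset ι} {d : ι → ℕ} {θ : ℝ} (hθ0 : 0 ≤ θ)
    (hθ1 : θ < 1) (hd : ∀ j ∈ s, 1 ≤ d j) (hinj : Set.InjOn d s) :
    ∑ j ∈ s, θ ^ d j ≤ θ / (1 - θ) := by
  classical
  have hinj' : Set.InjOn (fun j => d j - 1) s := fun a ha b hb h =>
    hinj ha hb (by have := hd a ha; have := hd b hb; simp only at h; omega)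
  calc ∑ j ∈ s, θ ^ d j = θ * ∑ j ∈ s, θ ^ (d j - 1) := by
        rw [Finset.mul_sum]
        exact Finset.sum_congr rfl fun j hj => by rw [← pow_succ', Nat.sub_add_cancel (hd j hj)]
    _ = θ * ∑ k ∈ s.image fun j => d j - 1, θ ^ k := by rw [Finset.sum_image hinj']
    _ ≤ θ * ∑' k, θ ^ k := mul_le_mul_of_nonneg_left (Summable.sum_le_tsum _
        (fun k _ => pow_nonneg hθ0 k) (summable_geometric_of_lt_one hθ0 hθ1)) hθ0
    _ = θ / (1 - θ) := by rw [tsum_geometric_of_lt_one hθ0 hθ1, div_eq_mul_inv]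

theorem sum_ite_eq_pow_dist_le {n : ℕ} {G θ : ℝ} (hG : 0 ≤ G) (hθ0 : 0 ≤ θ) (hθ1 : θ < 1)
    (i : Fin n) :
    ∑ j, (if i = j then 1 else G * θ ^ Nat.dist i j) ≤ 1 + 2 * G * (θ / (1 - θ)) := by
  have hd : ∀ j ∈ Finset.univ.erase i, 1 ≤ Nat.dist i j := fun j hj => by
    have := Fin.val_ne_of_ne (Finset.ne_of_mem_erase hj); unfold Nat.dist; omega
  have hlt : Set.InjOn (fun j : Fin n => Nat.dist i j) {j | j < i} := fun a ha b hb h => by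
    have := Fin.lt_def.1 ha; have := Fin.lt_def.1 hb
    dsimp only at h; unfold Nat.dist at h; ext; omega
  have hge : Set.InjOn (fun j : Fin n => Nat.dist i j) {j | ¬j < i} := fun a ha b hb h => by
    have := Fin.le_def.1 (not_lt.1 ha); have := Fin.le_def.1 (not_lt.1 hb)
    dsimp only at h; unfold Nat.dist at h; ext; omega
  have hbefore := sum_pow_le_of_injOn (s := (Finset.univ.erase i).filter (· < i)) hθ0 hθ1
    (fun j hj => hd j (Finset.mem_of_mem_filter j hj))
    (hlt.mono fun j hj => (Finset.mem_filter.1 hj).2)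
  have hafter := sum_pow_le_of_injOn (s := (Finset.univ.erase i).filter (¬· < i)) hθ0 hθ1
    (fun j hj => hd j (Finset.mem_of_mem_filter j hj))
    (hge.mono fun j hj => (Finset.mem_filter.1 hj).2)
  rw [← Finset.add_sum_erase _ _ (Finset.mem_univ i), if_pos rfl,
    Finset.sum_congr rfl fun j hj => if_neg (Finset.ne_of_mem_erase hj).symm, ← Finset.mul_sum,
    ← Finset.sum_filter_add_sum_filter_not _ (· < i)]
  nlinarith [mul_le_mul_of_nonneg_left (add_le_add hbefore hafter) hG]

theorem sum_sum_ite_eq_pow_dist_le {n : ℕ} {G θ : ℝ} (hG : 0 ≤ G) (hθ0 : 0 ≤ θ) (hθ1 : θ < 1) :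
    ∑ i : Fin n, ∑ j, (if i = j then 1 else G * θ ^ Nat.dist i j)
      ≤ n * ((1 + 2 * G * θ) / (1 - θ)) := by
  have h1θ : 0 < 1 - θ := by linarith
  have hrow : 1 + 2 * G * (θ / (1 - θ)) ≤ (1 + 2 * G * θ) / (1 - θ) := by
    rw [show 1 + 2 * G * (θ / (1 - θ)) = (1 - θ + 2 * G * θ) / (1 - θ) by field_simp]
    gcongr
    linarith
  calc ∑ i : Fin n, ∑ j, (if i = j then 1 else G * θ ^ Nat.dist i j)
      ≤ ∑ _i : Fin n, (1 + 2 * G * θ) / (1 - θ) :=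
        Finset.sum_le_sum fun i _ => (sum_ite_eq_pow_dist_le hG hθ0 hθ1 i).trans hrow
    _ = n * ((1 + 2 * G * θ) / (1 - θ)) := by
        rw [Finset.sum_const, Finset.card_univ, Fintype.card_fin, nsmul_eq_mul]

theorem isProbDistrib_emp {n : ℕ} (hn : 0 < n) (Y : Fin n → ℕ) : IsProbDistrib (emp Y) := by
  have hY : ∀ v, emp Y v = (∑ i, dirac (Y i) v) / n := fun v => by
    simp only [emp, dirac_comm _ v]; rfl
  refine ⟨fun v => hY v ▸ div_nonneg (Finset.sum_nonneg fun i _ => (isProbDistrib_dirac _).1 v)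
    n.cast_nonneg, ?_⟩
  have h := (hasSum_sum fun i (_ : i ∈ Finset.univ) => (isProbDistrib_dirac (Y i)).2).div_const
    (n : ℝ)
  simp only [Finset.sum_const, Finset.card_univ, Fintype.card_fin, nsmul_eq_mul, mul_one,
    div_self (Nat.cast_ne_zero.2 hn.ne' : (n : ℝ) ≠ 0)] at h
  exact (funext hY : emp Y = _) ▸ h

theorem sq_sub_emp_eq {n : ℕ} (hn : 0 < n) (Y : Fin n → ℕ) (v : ℕ) (r : ℝ) :
    (r - emp Y v) ^ 2 = (∑ i, ∑ j, (dirac v (Y i) - r) * (dirac v (Y j) - r)) / n ^ 2 := by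
  have hn' : (n : ℝ) ≠ 0 := Nat.cast_ne_zero.2 hn.ne'
  rw [← Finset.sum_mul_sum, ← sq, Finset.sum_sub_distrib, Finset.sum_const, Finset.card_univ,
    Fintype.card_fin, nsmul_eq_mul]
  simp only [emp, dirac]
  field_simp
  ring

theorem IsProbDistrib.expect_sq_sub_emp {n : ℕ} {μ : (Fin n → ℕ) → ℝ} (hμ : IsProbDistrib μ)
    (hn : 0 < n) (v : ℕ) {r : ℝ} (hr : r ∈ I) :
    expect μ (fun Y => (r - emp Y v) ^ 2)
      = (∑ i, ∑ j, expect μ fun Y => (dirac v (Y i) - r) * (dirac v (Y j) - r)) / n ^ 2 := by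
  have hterm : ∀ i j, Summable fun Y => μ Y * ((dirac v (Y i) - r) * (dirac v (Y j) - r)) :=
    fun i j => hμ.summable_mul fun Y => by
      rw [abs_mul]
      exact mul_le_one₀ (abs_sub_le_one_of_mem_unitInterval (dirac_mem_unitInterval _ _) hr)
        (abs_nonneg _) (abs_sub_le_one_of_mem_unitInterval (dirac_mem_unitInterval _ _) hr)
  simp only [sq_sub_emp_eq hn, div_eq_inv_mul, expect_const_mul]
  rw [expect_finset_sum (fun i _ => by
    simpa only [Finset.mul_sum] using summable_sum fun j (_ : j ∈ Finset.univ) => hterm i j)]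
  simp only [expect_finset_sum (fun j _ => hterm _ j)]

theorem IsProbDistrib.abs_iSup_abs_sub_le_one {ξ ν : ℕ → ℝ} (hξ : IsProbDistrib ξ)
    (hν : IsProbDistrib ν) : abs (⨆ v, |ξ v - ν v|) ≤ 1 :=
  abs_le.2 ⟨by linarith [Real.iSup_nonneg fun v => abs_nonneg (ξ v - ν v)],
    ciSup_le fun v => abs_sub_le_one_of_mem_unitInterval (hξ.mem_unitInterval v)
      (hν.mem_unitInterval v)⟩

theorem IsProbDistrib.iSup_abs_sub_le {ξ ν : ℕ → ℝ} (hξ : IsProbDistrib ξ) (hν : IsProbDistrib ν)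
    {t : ℝ} (ht : 0 < t) :
    ⨆ v, |ξ v - ν v| ≤ 1 / (2 * t) * ∑' v, (ξ v - ν v) ^ 2 + t / 2 :=
  ciSup_le fun v => (abs_le_add_div_two_of_sq_le ht
    ((hξ.summable_sq_sub hν).1.le_tsum v fun w _ => sq_nonneg _)).trans_eq (by ring)

section SecondMoment

variable {G θ : ℝ} {A B : ℕ → ℕ → ℝ} {π : ℕ → ℝ} {n : ℕ}

theorem expect_hmmLaw_sq_sub_emp_le (hA : IsKernel A) (hB : IsKernel B)
    (hge : IsGeomErgodic A π G θ) (hn : 0 < n) (v : ℕ) :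
    expect (hmmLaw π A B n) (fun Y => (kerApp B π v - emp Y v) ^ 2)
      ≤ kerApp B π v * ((1 + 2 * G * θ) / (n * (1 - θ))) := by
  have ⟨hG, hθ0, hθ1, hπ, _⟩ := hge
  have hρ := (hB.isProbDistrib_kerApp hπ.isProbDistrib).mem_unitInterval v
  have h1θ : 0 < 1 - θ := by linarith
  have hn' : (0 : ℝ) < n := Nat.cast_pos.2 hn
  calc expect (hmmLaw π A B n) (fun Y => (kerApp B π v - emp Y v) ^ 2)
      ≤ (∑ i : Fin n, ∑ j, kerApp B π v * if i = j then 1 else G * θ ^ Nat.dist i j) / n ^ 2 := by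
        rw [(isProbDistrib_hmmLaw hA hB hπ.isProbDistrib).expect_sq_sub_emp hn v hρ]
        gcongr with i _ j _
        exact expect_hmmLaw_cov_le hA hB hge v i j
    _ ≤ kerApp B π v * (n * ((1 + 2 * G * θ) / (1 - θ))) / n ^ 2 := by
        simp only [← Finset.mul_sum]
        gcongr
        · exact hρ.1
        · exact sum_sum_ite_eq_pow_dist_le (by linarith) hθ0 hθ1
    _ = kerApp B π v * ((1 + 2 * G * θ) / (n * (1 - θ))) := by
        field_simp

theorem expect_hmmLaw_tsum_sq_sub_emp_le (hA : IsKernel A) (hB : IsKernel B)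
    (hge : IsGeomErgodic A π G θ) (hn : 0 < n) :
    expect (hmmLaw π A B n) (fun Y => ∑' v, (kerApp B π v - emp Y v) ^ 2)
      ≤ (1 + 2 * G * θ) / (n * (1 - θ)) := by
  have hM := isProbDistrib_hmmLaw (n := n) hA hB hge.2.2.2.1.isProbDistrib
  have hρ := hB.isProbDistrib_kerApp hge.2.2.2.1.isProbDistrib
  set c := (1 + 2 * G * θ) / (n * (1 - θ))
  set f := fun (v : ℕ) (Y : Fin n → ℕ) => hmmLaw π A B n Y * (kerApp B π v - emp Y v) ^ 2
  have hf0 : ∀ v Y, 0 ≤ f v Y := fun v Y => mul_nonneg (hM.1 Y) (sq_nonneg _)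
  have hbound : ∀ v, ∑' Y, f v Y ≤ kerApp B π v * c := expect_hmmLaw_sq_sub_emp_le hA hB hge hn
  have hsum : Summable fun v => ∑' Y, f v Y :=
    .of_nonneg_of_le (fun v => tsum_nonneg (hf0 v)) hbound (hρ.summable.mul_right c)
  have h := summable_uncurry_of_nonneg hf0 (fun v => hM.summable_mul fun Y => by
    rw [abs_sq, sq_le_one_iff_abs_le_one]
    exact abs_sub_le_one_of_mem_unitInterval (hρ.mem_unitInterval v)
      ((isProbDistrib_emp hn Y).mem_unitInterval v)) hsum
  calc expect (hmmLaw π A B n) (fun Y => ∑' v, (kerApp B π v - emp Y v) ^ 2)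
      = ∑' v, ∑' Y, f v Y := by simp only [expect, ← tsum_mul_left]; exact h.tsum_comm
    _ ≤ ∑' v, kerApp B π v * c := Summable.tsum_le_tsum hbound hsum (hρ.summable.mul_right c)
    _ = c := by rw [tsum_mul_right, hρ.tsum_eq_one, one_mul]

end SecondMoment

/-- **Lemma 4.** For a stationary `(G,θ)`-geometrically ergodic hidden Markov chain with
stationary output distribution `ρ = Bπ`, `𝔼‖ρ − ρ̂‖_∞ ≤ √((1+2Gθ)/(n(1−θ)))`. -/
theorem expected_sup_le (G θ : ℝ) (π : ℕ → ℝ) (A B : ℕ → ℕ → ℝ)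
    (hA : IsKernel A) (hB : IsKernel B) (hge : IsGeomErgodic A π G θ)
    (n : ℕ) (hn : 0 < n) :
    expect (hmmLaw π A B n) (fun Y => ⨆ v : ℕ, |kerApp B π v - emp Y v|)
      ≤ Real.sqrt ((1 + 2 * G * θ) / (n * (1 - θ))) := by
  have ⟨hG, hθ0, hθ1, hπ, _⟩ := hge
  have hM := isProbDistrib_hmmLaw (n := n) hA hB hπ.isProbDistrib
  have hρ := hB.isProbDistrib_kerApp hπ.isProbDistrib
  set c := (1 + 2 * G * θ) / (n * (1 - θ))
  have hc : 0 < c := div_pos (by nlinarith) (mul_pos (Nat.cast_pos.2 hn) (by linarith))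
  set t := Real.sqrt c
  have ht : 0 < t := Real.sqrt_pos.2 hc
  have hS := fun Y => hρ.summable_sq_sub (isProbDistrib_emp hn Y)
  have hS0 : ∀ Y : Fin n → ℕ, 0 ≤ ∑' v, (kerApp B π v - emp Y v) ^ 2 := fun Y =>
    tsum_nonneg fun v => sq_nonneg _
  calc expect (hmmLaw π A B n) (fun Y => ⨆ v : ℕ, |kerApp B π v - emp Y v|)
      ≤ expect (hmmLaw π A B n)
          (fun Y => 1 / (2 * t) * ∑' v, (kerApp B π v - emp Y v) ^ 2 + t / 2) :=
        hM.expect_mono (D := 1 / (2 * t) * 2 + t / 2)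
          (fun Y => hρ.abs_iSup_abs_sub_le_one (isProbDistrib_emp hn Y))
          (fun Y => (abs_of_nonneg (by positivity [hS0 Y])).trans_le
            (by gcongr; exact (hS Y).2))
          fun Y => hρ.iSup_abs_sub_le (isProbDistrib_emp hn Y) ht
    _ = 1 / (2 * t) * expect (hmmLaw π A B n)
          (fun Y => ∑' v, (kerApp B π v - emp Y v) ^ 2) + t / 2 :=
        hM.expect_mul_add_const
          (hM.summable_mul fun Y => (abs_of_nonneg (hS0 Y)).trans_le (hS Y).2) _ _
    _ ≤ 1 / (2 * t) * c + t / 2 := by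
        gcongr
        exact expect_hmmLaw_tsum_sq_sub_emp_le hA hB hge hn
    _ = t := by
        rw [← Real.mul_self_sqrt hc.le]
        field_simp
        ring

end
end

section
/- Let ρ be any probability distribution on ℕ. Then (1/√n)·∑_{y : ρ_y ≥ 1/n} √ρ_y → 0 as n → ∞. -/
open scoped BigOperators
open Filter

noncomputable section

open Topology

lemma Real.sqrt_div_sqrt_le_of_inv_le {x t : ℝ} (ht : 0 ≤ t) (h : t⁻¹ ≤ x) :
    √x / √t ≤ x := by
  rcases ht.eq_or_lt with rfl | ht
  · simpa using h
  have hx : 0 < x := (inv_pos.2 ht).trans_le h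
  have h1 : 1 ≤ √x * √t := by
    rw [← Real.sqrt_mul hx.le, Real.one_le_sqrt]
    exact (inv_le_iff_one_le_mul₀ ht).1 h
  rw [div_le_iff₀ (Real.sqrt_pos.2 ht)]
  calc √x = √x * 1 := (mul_one _).symm
    _ ≤ √x * (√x * √t) := by gcongr
    _ = x * √t := by rw [← mul_assoc, Real.mul_self_sqrt hx.le]

lemma tendsto_one_div_sqrt_natCast_atTop : Tendsto (fun n : ℕ => 1 / √(n : ℝ)) atTop (𝓝 0) := by
  simp only [one_div]
  exact tendsto_inv_atTop_zero.comp (Real.tendsto_sqrt_atTop.comp tendsto_natCast_atTop_atTop)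

/-- Each term `√ρ_y / √n` with `ρ_y ≥ 1/n` is at most `ρ_y`, so dominated convergence against the
summable `ρ` applies. -/
theorem tendsto_one_div_sqrt_mul_tsum_sqrt_of_one_div_le {α : Type*} (ρ : α → ℝ)
    (hρ₀ : ∀ y, 0 ≤ ρ y) (hρ : Summable ρ) :
    Tendsto (fun n : ℕ => (1 / √n) * ∑' y, if 1 / (n : ℝ) ≤ ρ y then √(ρ y) else 0)
      atTop (𝓝 0) := by
  set f : ℕ → α → ℝ := fun n y => 1 / √n * if 1 / (n : ℝ) ≤ ρ y then √(ρ y) else 0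
  have hf₀ : ∀ n y, 0 ≤ f n y := fun n y => by positivity
  have hf_le_sqrt : ∀ n y, f n y ≤ 1 / √n * √(ρ y) := fun n y => by
    simp only [f]
    gcongr
    split_ifs <;> simp
  have hf_le : ∀ n y, f n y ≤ ρ y := fun n y => by
    simp only [f]
    split_ifs with h
    · rw [one_div_mul_eq_div]
      exact Real.sqrt_div_sqrt_le_of_inv_le (Nat.cast_nonneg n) (by rwa [← one_div])
    · simpa using hρ₀ y
  have hf_tendsto : ∀ y, Tendsto (f · y) atTop (𝓝 0) := fun y => by
    refine squeeze_zero (hf₀ · y) (hf_le_sqrt · y) ?_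
    simpa using tendsto_one_div_sqrt_natCast_atTop.mul_const √(ρ y)
  have hsum := tendsto_tsum_of_dominated_convergence hρ hf_tendsto
    (Eventually.of_forall fun n y => by rw [Real.norm_of_nonneg (hf₀ n y)]; exact hf_le n y)
  simpa only [tsum_zero, f, tsum_mul_left] using hsum

lemma IsStochastic.summable {ξ : ℕ → ℝ} (hξ : IsStochastic ξ) : Summable ξ := by
  by_contra h
  simpa [tsum_eq_zero_of_not_summable h] using hξ.2

/-- **Equation (17) / Lemma 7 of Berend–Kontorovich.** For any probability distribution `ρ` on ℕ,
`(1/√n) ∑_{y : ρ_y ≥ 1/n} √ρ_y → 0` as `n → ∞`. -/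
theorem sqrt_sum_tendsto_zero (ρ : ℕ → ℝ) (hρ : IsStochastic ρ) :
    Filter.Tendsto
      (fun n : ℕ => (1 / Real.sqrt n) * ∑' y, if 1 / (n : ℝ) ≤ ρ y then Real.sqrt (ρ y) else 0)
      Filter.atTop (nhds 0) :=
  tendsto_one_div_sqrt_mul_tsum_sqrt_of_one_div_le ρ hρ.1 hρ.summable

end
end
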